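/- Let P be a finite poset whose elements of crossing number one form a saturated chain c_1 < ... < c_k (k ≥ 1), with all other elements having crossing number zero. Then: exactly two elements cover c_k, exactly two elements are covered by c_1, each c_i with i < k is covered by exactly one element (namely c_{i+1}), and each c_i with i > 1 covers exactly one element (namely c_{i-1}). -/

import Mathlib

open Classical

variable {α : Type*}

/-- A saturated chain from `v` up to a maximal element: a list `v = v₀ ⋖ v₁ ⋖ … ⋖ vₖ`
with `vₖ` maximal. -/
def UpChain [PartialOrder α] (v : α) (l : List α) : Prop :=
  l.Chain' (· ⋖ ·) ∧ l.head? = some v ∧ ∃ m, l.getLast? = some m ∧ IsMax m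

/-- A saturated chain from a minimal element up to `v`. -/
def DownChain [PartialOrder α] (v : α) (l : List α) : Prop :=
  l.Chain' (· ⋖ ·) ∧ (∃ m, l.head? = some m ∧ IsMin m) ∧ l.getLast? = some v

/-- `uc v` : the number of saturated chains from `v` up to a maximal element. -/
noncomputable def uc [PartialOrder α] (v : α) : ℕ := Nat.card {l : List α // UpChain v l}

/-- `dc v` : the number of saturated chains from `v` down to a minimal element. -/
noncomputable def dc [PartialOrder α] (v : α) : ℕ := Nat.card {l : List α // DownChain v l}

/-- A maximal chain: a saturated chain from a minimal element to a maximal element. -/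
def IsMaxChainList [PartialOrder α] (l : List α) : Prop :=
  l.Chain' (· ⋖ ·) ∧ (∃ m, l.head? = some m ∧ IsMin m) ∧ ∃ m, l.getLast? = some m ∧ IsMax m

/-- `c(P)`: the number of maximal chains. -/
noncomputable def numMaxChains (α : Type*) [PartialOrder α] : ℕ :=
  Nat.card {l : List α // IsMaxChainList l}

/-- `max(P)`: the number of maximal elements. -/
noncomputable def numMax (α : Type*) [PartialOrder α] : ℕ := Nat.card {v : α // IsMax v}

/-- `min(P)`: the number of minimal elements. -/
noncomputable def numMin (α : Type*) [PartialOrder α] : ℕ := Nat.card {v : α // IsMin v}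

/-- `edges(P)`: the number of cover relations (edges of the Hasse diagram). -/
noncomputable def numEdges (α : Type*) [PartialOrder α] : ℕ :=
  Nat.card {p : α × α // p.1 ⋖ p.2}

/-- `gap(P) = c(P) + |P| - (max(P) + min(P) + edges(P))`. -/
noncomputable def gap (α : Type*) [PartialOrder α] : ℤ :=
  (numMaxChains α : ℤ) + Nat.card α - ((numMax α : ℤ) + numMin α + numEdges α)

/-- The crossing number `(uc(v)-1)(dc(v)-1)` of `v`. -/
noncomputable def crossingNumber [PartialOrder α] (v : α) : ℕ := (uc v - 1) * (dc v - 1)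

/-- `c` is the center of an X-shaped subposet: there are `a, b < c < d, e`
with `a ∥ b` and `d ∥ e`. -/
def IsXCenter [PartialOrder α] (c : α) : Prop :=
  ∃ a b d e : α, a < c ∧ b < c ∧ c < d ∧ c < e ∧
    ¬ a ≤ b ∧ ¬ b ≤ a ∧ ¬ d ≤ e ∧ ¬ e ≤ d

/-- `P` contains an X-shaped subposet. -/
def HasX (α : Type*) [PartialOrder α] : Prop := ∃ c : α, IsXCenter c

/-!
Splitting off the first step of a chain gives `uc v = ∑_{v ⋖ u} uc u` whenever `v` is not
maximal, and dually `dc v = ∑_{d ⋖ v} dc d`; in particular `uc` can only drop and `dc` only grow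
along a cover, and every term of these sums is at least `1`.

Crossing number one means `uc = dc = 2`. If `c_k ⋖ u`, then `u` is off the chain and
`dc u ≥ dc c_k = 2`, so crossing number zero forces `uc u = 1`; the recursion at `c_k` then reads
`2 = #{u | c_k ⋖ u}`. For `i < k`, the term `uc c_{i+1} = 2` already exhausts `uc c_i = 2`, which
leaves no room for a second cover of `c_i`. The statements at `c_1` and for lower covers are dual.
-/

open OrderDual

section Chains

variable [PartialOrder α]

theorem UpChain.cons {u v : α} {t : List α} (ht : UpChain u t) (hvu : v ⋖ u) :
    UpChain v (v :: t) := by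
  obtain ⟨hchain, hhead, m, hlast, hm⟩ := ht
  obtain ⟨w, t, rfl⟩ := List.exists_cons_of_ne_nil (l := t) (by rintro rfl; simp at hhead)
  obtain rfl : w = u := by simpa using hhead
  exact ⟨hchain.cons_cons hvu, rfl, m, by simpa using hlast, hm⟩

theorem UpChain.eq_singleton_of_isMax {v : α} {l : List α} (hl : UpChain v l) (hv : IsMax v) :
    l = [v] := by
  obtain ⟨hchain, hhead, -⟩ := hl
  match l, hchain, hhead with
  | [_], _, rfl => rfl
  | _ :: _ :: _, hchain, rfl =>
    have hcov := (List.isChain_cons_cons.mp hchain).1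
    exact absurd (hv hcov.le) hcov.lt.not_ge

theorem UpChain.exists_eq_cons {v : α} {l : List α} (hl : UpChain v l) (hv : ¬ IsMax v) :
    ∃ u t, l = v :: t ∧ v ⋖ u ∧ UpChain u t := by
  obtain ⟨hchain, hhead, m, hlast, hm⟩ := hl
  match l, hchain, hhead, hlast with
  | [_], _, rfl, hlast =>
    obtain rfl : v = m := by simpa using hlast
    exact absurd hm hv
  | _ :: u :: t, hchain, rfl, hlast =>
    exact ⟨u, u :: t, rfl, (List.isChain_cons_cons.mp hchain).1,
      (List.isChain_cons_cons.mp hchain).2, rfl, m, by simpa using hlast, hm⟩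

theorem exists_upChain [WellFoundedLT α] [WellFoundedGT α] (v : α) : ∃ l, UpChain v l := by
  induction v using WellFoundedGT.induction with
  | _ v ih =>
    by_cases hv : IsMax v
    · exact ⟨[v], List.isChain_singleton v, rfl, v, rfl, hv⟩
    · obtain ⟨u, hvu⟩ := exists_covBy_of_wellFoundedLT hv
      obtain ⟨t, ht⟩ := ih u hvu.lt
      exact ⟨v :: t, ht.cons hvu⟩

theorem UpChain.nodup {v : α} {l : List α} (hl : UpChain v l) : l.Nodup :=
  (List.isChain_iff_pairwise.mp (hl.1.imp fun _ _ h => h.lt)).imp ne_of_lt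

instance [Finite α] (v : α) : Finite {l : List α // UpChain v l} := by
  have := Fintype.ofFinite α
  exact ((List.finite_length_le α (Fintype.card α)).subset
    fun _ hl => UpChain.nodup hl |>.length_le_card).to_subtype

theorem downChain_iff_upChain_toDual {v : α} {l : List α} :
    DownChain v l ↔ UpChain (toDual v) (l.reverse.map toDual) := by
  simp only [DownChain, UpChain, List.Chain', List.isChain_map, List.isChain_reverse,
    List.head?_map, List.head?_reverse, List.getLast?_map, List.getLast?_reverse,
    toDual_covBy_toDual_iff, Option.map_eq_some_iff, toDual_inj]
  constructor
  · rintro ⟨hchain, ⟨m, hhead, hm⟩, hlast⟩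
    exact ⟨hchain, ⟨v, hlast, rfl⟩, toDual m, ⟨m, hhead, rfl⟩, hm⟩
  · rintro ⟨hchain, ⟨w, hlast, rfl⟩, _, ⟨m, hhead, rfl⟩, hm⟩
    exact ⟨hchain, ⟨m, hhead, hm⟩, hlast⟩

theorem IsMax.uc_eq_one {v : α} (hv : IsMax v) : uc v = 1 := by
  rw [uc, Nat.card_eq_one_iff_exists]
  exact ⟨⟨[v], List.isChain_singleton v, rfl, v, rfl, hv⟩,
    fun ⟨l, hl⟩ => Subtype.ext (hl.eq_singleton_of_isMax hv)⟩

theorem dc_eq_uc_toDual (v : α) : dc v = uc (toDual v) :=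
  Nat.card_congr <|
    ((List.reverse_involutive.toPerm _).trans (Equiv.listEquivOfEquiv toDual)).subtypeEquiv
      fun _ => downChain_iff_upChain_toDual

theorem IsMin.dc_eq_one {v : α} (hv : IsMin v) : dc v = 1 :=
  dc_eq_uc_toDual v ▸ hv.toDual.uc_eq_one

theorem uc_eq_sum_covBy [Fintype α] {v : α} (hv : ¬ IsMax v) :
    uc v = ∑ u : {u : α // v ⋖ u}, uc (u : α) := by
  let cons (p : Σ u : {u : α // v ⋖ u}, {l : List α // UpChain (u : α) l}) :
      {l : List α // UpChain v l} := ⟨v :: p.2, p.2.2.cons p.1.2⟩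
  have hcons : Function.Bijective cons := by
    refine ⟨fun ⟨⟨u, _⟩, ⟨t, ht⟩⟩ ⟨⟨u', _⟩, ⟨t', ht'⟩⟩ h => ?_, fun ⟨l, hl⟩ => ?_⟩
    · obtain rfl : t = t' := (List.cons_inj_right v).mp (congrArg Subtype.val h)
      obtain rfl : u = u' := Option.some_inj.mp (ht.2.1.symm.trans ht'.2.1)
      rfl
    · obtain ⟨u, t, rfl, hvu, ht⟩ := hl.exists_eq_cons hv
      exact ⟨⟨⟨u, hvu⟩, ⟨t, ht⟩⟩, rfl⟩
  rw [uc, ← Nat.card_eq_of_bijective cons hcons, Nat.card_sigma]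
  rfl

end Chains

section Counting

variable [PartialOrder α] [Finite α]

theorem uc_pos (v : α) : 0 < uc v := by
  obtain ⟨l, hl⟩ := exists_upChain v
  have : Nonempty {l // UpChain v l} := ⟨⟨l, hl⟩⟩
  exact Nat.card_pos

theorem uc_le_uc_of_covBy {v u : α} (hvu : v ⋖ u) : uc u ≤ uc v := by
  have := Fintype.ofFinite α
  rw [uc_eq_sum_covBy hvu.lt.not_isMax]
  exact Finset.single_le_sum (f := fun u : {u // v ⋖ u} => uc (u : α))
    (fun _ _ => Nat.zero_le _) (Finset.mem_univ ⟨u, hvu⟩)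

theorem eq_of_covBy_of_uc_eq {v u w : α} (hvu : v ⋖ u) (hvw : v ⋖ w) (huv : uc u = uc v) :
    w = u := by
  have := Fintype.ofFinite α
  by_contra hwu
  have hsum : uc u + uc w ≤ uc v := by
    rw [uc_eq_sum_covBy hvu.lt.not_isMax]
    exact Finset.add_le_sum (f := fun u : {u // v ⋖ u} => uc (u : α))
      (fun _ _ => Nat.zero_le _) (Finset.mem_univ ⟨u, hvu⟩) (Finset.mem_univ ⟨w, hvw⟩)
      (fun h => hwu (congrArg Subtype.val h).symm)
  have := uc_pos w
  omega

theorem card_covBy_eq_uc {v : α} (hv : ¬ IsMax v) (hcovers : ∀ u, v ⋖ u → uc u = 1) :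
    Nat.card {u // v ⋖ u} = uc v := by
  have := Fintype.ofFinite α
  rw [uc_eq_sum_covBy hv, Finset.sum_congr rfl fun u _ => hcovers u.1 u.2]
  simp

theorem dc_pos (v : α) : 0 < dc v :=
  dc_eq_uc_toDual v ▸ uc_pos _

theorem dc_le_dc_of_covBy {d v : α} (hdv : d ⋖ v) : dc d ≤ dc v := by
  simpa only [dc_eq_uc_toDual] using uc_le_uc_of_covBy (toDual_covBy_toDual_iff.mpr hdv)

theorem eq_of_covBy_of_dc_eq {v d e : α} (hdv : d ⋖ v) (hev : e ⋖ v) (hdv' : dc d = dc v) :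
    e = d := by
  simp only [dc_eq_uc_toDual] at hdv'
  exact toDual.injective <| eq_of_covBy_of_uc_eq (toDual_covBy_toDual_iff.mpr hdv)
    (toDual_covBy_toDual_iff.mpr hev) hdv'

theorem card_covBy_eq_dc {v : α} (hv : ¬ IsMin v) (hcovers : ∀ d, d ⋖ v → dc d = 1) :
    Nat.card {d // d ⋖ v} = dc v := by
  rw [dc_eq_uc_toDual, ← card_covBy_eq_uc (isMax_toDual_iff.not.mpr hv)
    fun u hu => (dc_eq_uc_toDual (ofDual u)).symm.trans (hcovers _ (toDual_covBy_toDual_iff.mp hu))]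
  exact Nat.card_congr <| toDual.subtypeEquiv fun _ => toDual_covBy_toDual_iff.symm

end Counting

section Crossing

variable [PartialOrder α] [Finite α]

theorem crossingNumber_eq_one_iff {v : α} : crossingNumber v = 1 ↔ uc v = 2 ∧ dc v = 2 := by
  have := uc_pos v
  have := dc_pos v
  rw [crossingNumber, mul_eq_one]
  omega

theorem crossingNumber_eq_zero_iff {v : α} : crossingNumber v = 0 ↔ uc v = 1 ∨ dc v = 1 := by
  have := uc_pos v
  have := dc_pos v
  rw [crossingNumber, Nat.mul_eq_zero]
  omega

theorem CovBy.uc_eq_one_of_crossingNumber_eq_zero {v u : α} (hvu : v ⋖ u) (hv : 2 ≤ dc v)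
    (hu : crossingNumber u = 0) : uc u = 1 :=
  (crossingNumber_eq_zero_iff.mp hu).resolve_right fun h => by
    have := dc_le_dc_of_covBy hvu
    omega

theorem CovBy.dc_eq_one_of_crossingNumber_eq_zero {d v : α} (hdv : d ⋖ v) (hv : 2 ≤ uc v)
    (hd : crossingNumber d = 0) : dc d = 1 :=
  (crossingNumber_eq_zero_iff.mp hd).resolve_left fun h => by
    have := uc_le_uc_of_covBy hdv
    omega

end Crossing

theorem crossing_chain_covers (α : Type*) [Fintype α] [PartialOrder α] (l : List α) (hne : l ≠ [])
    (hchain : l.Chain' (· ⋖ ·))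
    (hone : ∀ v ∈ l, crossingNumber v = 1)
    (hzero : ∀ v : α, v ∉ l → crossingNumber v = 0) :
    Nat.card {u : α // l.getLast hne ⋖ u} = 2 ∧
    Nat.card {d : α // d ⋖ l.head hne} = 2 ∧
    (∀ (i : ℕ) (h : i + 1 < l.length), ∀ x : α,
      l.get ⟨i, Nat.lt_of_succ_lt h⟩ ⋖ x → x = l.get ⟨i + 1, h⟩) ∧
    (∀ (i : ℕ) (h : i + 1 < l.length), ∀ x : α,
      x ⋖ l.get ⟨i + 1, h⟩ → x = l.get ⟨i, Nat.lt_of_succ_lt h⟩) := by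
  have hmem (v) (hv : v ∈ l) : uc v = 2 ∧ dc v = 2 := crossingNumber_eq_one_iff.mp (hone v hv)
  have hsorted : l.Pairwise (· ≤ ·) :=
    List.isChain_iff_pairwise.mp (hchain.imp fun _ _ h => h.le)
  have hstep (i) (h : i + 1 < l.length) : l.get ⟨i, Nat.lt_of_succ_lt h⟩ ⋖ l.get ⟨i + 1, h⟩ :=
    List.isChain_iff_getElem.mp hchain i h
  obtain ⟨huc_last, hdc_last⟩ := hmem _ (l.getLast_mem hne)
  obtain ⟨huc_head, hdc_head⟩ := hmem _ (l.head_mem hne)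
  refine ⟨?_, ?_, fun i h x hx => ?_, fun i h x hx => ?_⟩
  · refine (card_covBy_eq_uc (fun hmax => by simp [hmax.uc_eq_one] at huc_last)
      fun u hu => hu.uc_eq_one_of_crossingNumber_eq_zero hdc_last.ge (hzero u fun hul => ?_)).trans
      huc_last
    exact (hsorted.rel_getLast hul).not_gt hu.lt
  · refine (card_covBy_eq_dc (fun hmin => by simp [hmin.dc_eq_one] at hdc_head)
      fun d hd => hd.dc_eq_one_of_crossingNumber_eq_zero huc_head.ge (hzero d fun hdl => ?_)).trans
      hdc_head
    exact (hsorted.rel_head hdl).not_gt hd.lt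
  · exact eq_of_covBy_of_uc_eq (hstep i h) hx
      ((hmem _ (l.get_mem _)).1.trans (hmem _ (l.get_mem _)).1.symm)
  · exact eq_of_covBy_of_dc_eq (hstep i h) hx
      ((hmem _ (l.get_mem _)).2.trans (hmem _ (l.get_mem _)).2.symm)
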